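/- arXiv:2507.08608 — 8 statements merged into one kernel-verified Lean document; each statement's English description precedes it below -/
import Mathlib

section
/- Let G be a commutative semigroup and a, b, c ∈ G. Suppose a + b = c + b, and suppose there exist u, v ∈ G and a positive integer n with n•a = u + b and n•c = v + b. Then (n² + n)•a = (n² + n)•c. -/
/-- `posSmul n x` is the `n`-fold sum `x + x + ⋯ + x` for `n ≥ 1`
(with the junk value `x` at `n = 0`). -/
def posSmul {G : Type*} [AddCommSemigroup G] : ℕ → G → G
  | 0, x => x
  | 1, x => x
  | (n+2), x => x + posSmul (n+1) x

lemma posSmul_succ {G : Type*} [AddCommSemigroup G] (n : ℕ) (hn : 0 < n) (x : G) :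
    posSmul (n + 1) x = x + posSmul n x := by
  cases n with
  | zero => exact absurd hn (by simp)
  | succ m => rfl

lemma posSmul_add {G : Type*} [AddCommSemigroup G] (m n : ℕ) (hm : 0 < m) (hn : 0 < n)
    (x : G) : posSmul (m + n) x = posSmul m x + posSmul n x := by
  induction m with
  | zero => exact absurd hm (by simp)
  | succ k ih =>
    cases Nat.eq_zero_or_pos k with
    | inl h =>
      subst h
      rw [show 1 + n = n + 1 from Nat.add_comm 1 n, posSmul_succ n hn]
      rfl
    | inr hk =>
      rw [show k + 1 + n = (k + n) + 1 from by omega,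
        posSmul_succ (k + n) (by omega), ih hk, posSmul_succ k hk, add_assoc]

lemma posSmul_mul {G : Type*} [AddCommSemigroup G] (m n : ℕ) (hm : 0 < m) (hn : 0 < n)
    (x : G) : posSmul (m * n) x = posSmul m (posSmul n x) := by
  induction m with
  | zero => exact absurd hm (by simp)
  | succ k ih =>
    cases Nat.eq_zero_or_pos k with
    | inl h => subst h; simp; rfl
    | inr hk =>
      rw [posSmul_succ k hk, show (k + 1) * n = n + k * n from by ring,
        posSmul_add n (k * n) hn (Nat.mul_pos hk hn), ih hk]

lemma posSmul_cancel {G : Type*} [AddCommSemigroup G] {a b c : G}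
    (hab : a + b = c + b) (k : ℕ) (hk : 0 < k) :
    posSmul k a + b = posSmul k c + b := by
  induction k with
  | zero => exact absurd hk (by simp)
  | succ m ih =>
    cases Nat.eq_zero_or_pos m with
    | inl h => subst h; exact hab
    | inr hm =>
      rw [posSmul_succ m hm, posSmul_succ m hm]
      calc a + posSmul m a + b = a + (posSmul m a + b) := by ac_rfl
        _ = a + (posSmul m c + b) := by rw [ih hm]
        _ = (a + b) + posSmul m c := by ac_rfl
        _ = (c + b) + posSmul m c := by rw [hab]
        _ = c + posSmul m c + b := by ac_rfl

lemma posSmul_exists_b {G : Type*} [AddCommSemigroup G] (v b : G) (k : ℕ) (hk : 0 < k) :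
    ∃ w : G, posSmul k (v + b) = w + b := by
  induction k with
  | zero => exact absurd hk (by simp)
  | succ m ih =>
    cases Nat.eq_zero_or_pos m with
    | inl h => subst h; exact ⟨v, rfl⟩
    | inr hm =>
      obtain ⟨w, hw⟩ := ih hm
      exact ⟨v + b + w, by rw [posSmul_succ m hm, hw]; ac_rfl⟩

theorem stmt1 {G : Type*} [AddCommSemigroup G] (a b c : G) (n : ℕ) (hn : 0 < n)
    (hab : a + b = c + b)
    (hu : ∃ u : G, posSmul n a = u + b) (hv : ∃ v : G, posSmul n c = v + b) :
    posSmul (n ^ 2 + n) a = posSmul (n ^ 2 + n) c := by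
  obtain ⟨u, hu⟩ := hu
  obtain ⟨v, hv⟩ := hv
  have hn2 : 0 < n ^ 2 := by positivity
  have hsq : n ^ 2 = n * n := sq n
  -- n²•a + b = n²•c + b
  have h1 : posSmul (n ^ 2) a + b = posSmul (n ^ 2) c + b := posSmul_cancel hab _ hn2
  -- n•a + b = n•c + b
  have h2 : posSmul n a + b = posSmul n c + b := posSmul_cancel hab n hn
  -- n²•c = w + b
  obtain ⟨w, hw⟩ : ∃ w : G, posSmul (n ^ 2) c = w + b := by
    have : posSmul (n ^ 2) c = posSmul n (v + b) := by
      rw [hsq, posSmul_mul n n hn hn, hv]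
    obtain ⟨w, hw⟩ := posSmul_exists_b v b n hn
    exact ⟨w, this.trans hw⟩
  calc posSmul (n ^ 2 + n) a = posSmul (n ^ 2) a + posSmul n a := posSmul_add _ _ hn2 hn a
    _ = posSmul (n ^ 2) a + (u + b) := by rw [hu]
    _ = u + (posSmul (n ^ 2) a + b) := by ac_rfl
    _ = u + (posSmul (n ^ 2) c + b) := by rw [h1]
    _ = posSmul (n ^ 2) c + (u + b) := by ac_rfl
    _ = posSmul (n ^ 2) c + posSmul n a := by rw [hu]
    _ = w + (posSmul n a + b) := by rw [hw]; ac_rfl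
    _ = w + (posSmul n c + b) := by rw [h2]
    _ = (w + b) + posSmul n c := by ac_rfl
    _ = posSmul (n ^ 2) c + posSmul n c := by rw [hw]
    _ = posSmul (n ^ 2 + n) c := (posSmul_add _ _ hn2 hn c).symm
end

section
/- Let K be a subfield of ℝ and let a₁, ..., a_n be positive real numbers. Then there exist positive real numbers b₁, ..., b_t that are linearly independent over K such that every a_i is a linear combination of b₁, ..., b_t with nonnegative coefficients from K. -/
lemma weights_exist {ι : Type*} [Fintype ι] (P : Finset ι) (u : ι → ℝ)
    (hu : ∀ j ∈ P, 0 < u j) (hsum : 1 < ∑ j ∈ P, u j) :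
    ∃ q : ι → ℚ, (∀ j ∈ P, 0 < q j ∧ (q j : ℝ) < u j) ∧ (∑ j ∈ P, (q j : ℝ)) = 1 := by
  classical
  set U : ℝ := ∑ j ∈ P, u j with hU
  have hU1 : 1 < U := hsum
  have hU0 : 0 < U := lt_trans one_pos hU1
  set θ : ℝ := (1 + U) / (2 * U) with hθ
  have hθ0 : 0 < θ := by positivity
  have hθ1 : θ < 1 := by
    rw [hθ, div_lt_one (by positivity)]; linarith
  set v : ι → ℝ := fun j => if j ∈ P then u j else 1 with hv
  have hv0 : ∀ j, 0 < v j := by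
    intro j; by_cases h : j ∈ P
    · simpa [hv, h] using hu j h
    · simp [hv, h]
  have hkey : ∀ j, θ * v j < v j := by
    intro j
    have := hv0 j
    nlinarith
  choose q' hq'1 hq'2 using fun j => exists_rat_btwn (hkey j)
  have hq'pos : ∀ j, 0 < q' j := by
    intro j
    have hvj := hv0 j
    have h1 : (0:ℝ) < θ * v j := mul_pos hθ0 hvj
    have := lt_trans h1 (hq'1 j)
    exact_mod_cast this
  set W : ℚ := ∑ j ∈ P, q' j with hW
  have hWR : (W : ℝ) = ∑ j ∈ P, (q' j : ℝ) := by push_cast [hW]; ring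
  have hW1 : (1:ℝ) < (W:ℝ) := by
    rw [hWR]
    have h2 : ∑ j ∈ P, θ * v j < ∑ j ∈ P, (q' j : ℝ) := by
      apply Finset.sum_lt_sum_of_nonempty
      · by_contra hPe
        rw [Finset.not_nonempty_iff_eq_empty] at hPe
        rw [hU, hPe, Finset.sum_empty] at hU1
        linarith
      · intro j hj; exact hq'1 j
    have h3 : ∑ j ∈ P, θ * v j = θ * U := by
      rw [← Finset.mul_sum]
      congr 1
      exact Finset.sum_congr rfl (fun j hj => by simp [hv, hj])
    have h4 : 1 < θ * U := by
      rw [hθ]; rw [div_mul_eq_mul_div, lt_div_iff₀ (by positivity)]; nlinarith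
    linarith [h3 ▸ h2]
  have hW0 : (0:ℝ) < (W:ℝ) := lt_trans one_pos hW1
  refine ⟨fun j => q' j / W, ?_, ?_⟩
  · intro j hj
    constructor
    · apply div_pos (hq'pos j); exact_mod_cast hW0
    · push_cast
      have h5 : (q' j : ℝ) / (W:ℝ) < (q' j : ℝ) := by
        apply div_lt_self _ hW1
        exact_mod_cast hq'pos j
      have h6 : (q' j : ℝ) < v j := hq'2 j
      have : v j = u j := by simp [hv, hj]
      linarith
  · push_cast
    rw [← Finset.sum_div, ← hWR, div_self (ne_of_gt hW0)]


lemma step_lemma (K : Subfield ℝ) {t : ℕ} (b : Fin t → ℝ) (hbpos : ∀ j, 0 < b j)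
    (hli : LinearIndependent K b) (aL : ℝ) (haL : 0 < aL) (c : Fin t → K)
    (hc : aL = ∑ j, (c j : ℝ) * b j) :
    ∃ b' : Fin t → ℝ, (∀ j, 0 < b' j) ∧ LinearIndependent K b' ∧
      (∀ j, ∃ s : Fin t → K, (∀ k, 0 ≤ (s k : ℝ)) ∧ b j = ∑ k, (s k : ℝ) * b' k) ∧
      (∃ s : Fin t → K, (∀ k, 0 ≤ (s k : ℝ)) ∧ aL = ∑ k, (s k : ℝ) * b' k) := by
  classical
  by_cases hneg : ∀ j, 0 ≤ (c j : ℝ)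
  · refine ⟨b, hbpos, hli, ?_, ⟨c, hneg, hc⟩⟩
    intro j
    refine ⟨fun k => if k = j then 1 else 0, ?_, ?_⟩
    · intro k; by_cases h : k = j <;> simp [h]
    · simp [apply_ite (fun z : K => (z : ℝ)), ite_mul, Finset.sum_ite_eq']
  push_neg at hneg
  obtain ⟨k₀, hk₀⟩ := hneg
  set P : Finset (Fin t) := Finset.univ.filter (fun j => (0:ℝ) < (c j : ℝ)) with hPdef
  set N : Finset (Fin t) := Finset.univ.filter (fun j => (c j : ℝ) < 0) with hNdef
  set m : ℝ := ∑ k ∈ N, (-(c k : ℝ)) * b k with hmdef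
  have hm : 0 < m := by
    apply Finset.sum_pos
    · intro k hk
      rw [hNdef, Finset.mem_filter] at hk
      exact mul_pos (by linarith [hk.2]) (hbpos k)
    · exact ⟨k₀, by simp [hNdef, hk₀]⟩
  have hrest : ∑ j ∈ Finset.univ.filter (fun j => ¬ (0:ℝ) < (c j : ℝ)), (c j : ℝ) * b j = -m := by
    have hsub : N ⊆ Finset.univ.filter (fun j => ¬ (0:ℝ) < (c j : ℝ)) := by
      intro j hj
      rw [hNdef, Finset.mem_filter] at hj
      rw [Finset.mem_filter]
      exact ⟨Finset.mem_univ j, by linarith [hj.2]⟩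
    rw [← Finset.sum_subset hsub]
    · rw [hmdef, ← Finset.sum_neg_distrib]
      apply Finset.sum_congr rfl
      intro k _; ring
    · intro x hx hxN
      rw [Finset.mem_filter] at hx
      rw [hNdef, Finset.mem_filter] at hxN
      push_neg at hxN
      have h0 : (c x : ℝ) = 0 := le_antisymm (not_lt.mp hx.2) (hxN (Finset.mem_univ x))
      rw [h0, zero_mul]
  have hS : aL + m = ∑ j ∈ P, (c j : ℝ) * b j := by
    have hsplit := Finset.sum_filter_add_sum_filter_not Finset.univ
      (fun j => (0:ℝ) < (c j : ℝ)) (fun j => (c j : ℝ) * b j)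
    rw [← hsplit, hrest] at hc
    rw [hc]; ring
  have hPne : P.Nonempty := by
    rw [Finset.nonempty_iff_ne_empty]
    intro h
    rw [h, Finset.sum_empty] at hS
    linarith
  have hcposP : ∀ j ∈ P, (0:ℝ) < (c j : ℝ) := by
    intro j hj; rw [hPdef, Finset.mem_filter] at hj; exact hj.2
  obtain ⟨q, hq1, hq2⟩ := weights_exist P (fun j => (c j : ℝ) * b j / m)
    (fun j hj => div_pos (mul_pos (hcposP j hj) (hbpos j)) hm)
    (by
      rw [← Finset.sum_div, ← hS, one_lt_div hm]
      linarith)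
  have hqm : ∀ j ∈ P, (q j : ℝ) * m < (c j : ℝ) * b j := by
    intro j hj
    have := (hq1 j hj).2
    rw [lt_div_iff₀ hm] at this
    exact this
  have hqpos : ∀ j ∈ P, (0:ℝ) ≤ (q j : ℝ) := by
    intro j hj
    exact_mod_cast le_of_lt (hq1 j hj).1
  set b' : Fin t → ℝ := fun j => if (0:ℝ) < (c j : ℝ) then (c j : ℝ) * b j - (q j : ℝ) * m else b j
    with hb'def
  set qK : Fin t → K := fun j => ((q j : ℚ) : K) with hqKdef
  have hqK : ∀ j, ((qK j : K) : ℝ) = (q j : ℝ) := by intro j; rw [hqKdef]; norm_cast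
  have hb'N : ∀ k ∈ N, b' k = b k := by
    intro k hk
    rw [hNdef, Finset.mem_filter] at hk
    rw [hb'def]
    simp only [if_neg (not_lt.mpr (le_of_lt hk.2))]
  have hm' : m = ∑ k ∈ N, (-(c k : ℝ)) * b' k := by
    rw [hmdef]
    exact Finset.sum_congr rfl (fun k hk => by rw [hb'N k hk])
  have hb'pos : ∀ j, 0 < b' j := by
    intro j
    by_cases h : (0:ℝ) < (c j : ℝ)
    · have hjP : j ∈ P := by rw [hPdef, Finset.mem_filter]; exact ⟨Finset.mem_univ j, h⟩
      rw [hb'def]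
      simp only [if_pos h]
      linarith [hqm j hjP]
    · rw [hb'def]; simp only [if_neg h]; exact hbpos j
  -- linear independence
  have hli' : LinearIndependent K b' := by
    rw [Fintype.linearIndependent_iff] at hli ⊢
    intro g hg
    have hg' : ∑ j, (g j : ℝ) * b' j = 0 := hg
    set G : K := ∑ i ∈ P, g i * qK i with hGdef
    have hGR : ((G : K) : ℝ) = ∑ i ∈ P, (g i : ℝ) * (q i : ℝ) := by
      rw [hGdef]
      push_cast
      exact Finset.sum_congr rfl (fun i _ => by rw [hqK])
    set hfun : Fin t → K := fun j => if (0:ℝ) < (c j : ℝ) then g j * c j else g j + G * c j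
      with hhdef
    have hcast : ∀ j, ((hfun j : K) : ℝ) =
        if (0:ℝ) < (c j : ℝ) then (g j : ℝ) * (c j : ℝ) else (g j : ℝ) + ((G:K):ℝ) * (c j : ℝ) := by
      intro j
      simp only [hhdef]
      split_ifs <;> push_cast <;> ring
    have key : ∑ j, (hfun j : ℝ) * b j = 0 := by
      rw [← hg']
      rw [← Finset.sum_filter_add_sum_filter_not Finset.univ (fun j => (0:ℝ) < (c j : ℝ))
        (fun j => (hfun j : ℝ) * b j)]
      rw [← Finset.sum_filter_add_sum_filter_not Finset.univ (fun j => (0:ℝ) < (c j : ℝ))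
        (fun j => (g j : ℝ) * b' j)]
      rw [← hPdef]
      have e1 : ∑ j ∈ P, (hfun j : ℝ) * b j = ∑ j ∈ P, (g j : ℝ) * ((c j : ℝ) * b j) := by
        apply Finset.sum_congr rfl
        intro j hj
        rw [hcast j, if_pos (hcposP j hj)]
        ring
      have e2 : ∑ j ∈ Finset.univ.filter (fun j => ¬ (0:ℝ) < (c j : ℝ)), (hfun j : ℝ) * b j
          = (∑ j ∈ Finset.univ.filter (fun j => ¬ (0:ℝ) < (c j : ℝ)), (g j : ℝ) * b j)
            + ((G:K):ℝ) * (-m) := by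
        rw [← hrest, Finset.mul_sum, ← Finset.sum_add_distrib]
        apply Finset.sum_congr rfl
        intro j hj
        rw [Finset.mem_filter] at hj
        rw [hcast j, if_neg hj.2]
        ring
      have e3 : ∑ j ∈ P, (g j : ℝ) * b' j
          = (∑ j ∈ P, (g j : ℝ) * ((c j : ℝ) * b j)) - ((G:K):ℝ) * m := by
        rw [hGR, Finset.sum_mul, ← Finset.sum_sub_distrib]
        apply Finset.sum_congr rfl
        intro j hj
        rw [hb'def]
        simp only [if_pos (hcposP j hj)]
        ring
      have e4 : ∑ j ∈ Finset.univ.filter (fun j => ¬ (0:ℝ) < (c j : ℝ)), (g j : ℝ) * b' j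
          = ∑ j ∈ Finset.univ.filter (fun j => ¬ (0:ℝ) < (c j : ℝ)), (g j : ℝ) * b j := by
        apply Finset.sum_congr rfl
        intro j hj
        rw [Finset.mem_filter] at hj
        rw [hb'def]
        simp only [if_neg hj.2]
      rw [e1, e2, e3, e4]
      ring
    have hz : ∀ j, hfun j = 0 := hli hfun key
    have hgP : ∀ j ∈ P, g j = 0 := by
      intro j hj
      have h := hz j
      simp only [hhdef] at h
      rw [if_pos (hcposP j hj)] at h
      have hcne : c j ≠ 0 := by
        intro h0
        have h1 := hcposP j hj
        rw [h0] at h1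
        simp at h1
      exact (mul_eq_zero.mp h).resolve_right hcne
    have hG0 : G = 0 := by
      rw [hGdef]
      exact Finset.sum_eq_zero (fun i hi => by rw [hgP i hi, zero_mul])
    intro j
    by_cases h : (0:ℝ) < (c j : ℝ)
    · exact hgP j (by rw [hPdef, Finset.mem_filter]; exact ⟨Finset.mem_univ j, h⟩)
    · have hzj := hz j
      simp only [hhdef] at hzj
      rw [if_neg h, hG0, zero_mul, add_zero] at hzj
      exact hzj
  -- representations of the b j
  have hrepb : ∀ j, ∃ s : Fin t → K, (∀ k, 0 ≤ (s k : ℝ)) ∧ b j = ∑ k, (s k : ℝ) * b' k := by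
    intro j
    by_cases h : (0:ℝ) < (c j : ℝ)
    · have hjP : j ∈ P := by rw [hPdef, Finset.mem_filter]; exact ⟨Finset.mem_univ j, h⟩
      set s : Fin t → K := fun k => (if k = j then (c j)⁻¹ else 0)
        + (if (c k : ℝ) < 0 then (c j)⁻¹ * qK j * (-(c k)) else 0) with hsdef
      have hscast : ∀ k, ((s k : K) : ℝ) = (if k = j then (c j : ℝ)⁻¹ else 0)
          + (if (c k : ℝ) < 0 then (c j : ℝ)⁻¹ * (q j : ℝ) * (-(c k : ℝ)) else 0) := by
        intro k
        simp only [hsdef]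
        split_ifs <;> push_cast [hqK] <;> ring
      refine ⟨s, ?_, ?_⟩
      · intro k
        rw [hscast]
        apply add_nonneg
        · split_ifs
          · rw [inv_nonneg]; linarith
          · exact le_refl 0
        · split_ifs with h2
          · exact mul_nonneg (mul_nonneg (inv_nonneg.mpr (le_of_lt h)) (hqpos j hjP))
              (by linarith)
          · exact le_refl 0
      · have e1 : ∑ k, (s k : ℝ) * b' k
            = (∑ k, (if k = j then (c j : ℝ)⁻¹ else 0) * b' k)
              + ∑ k, (if (c k : ℝ) < 0 then (c j : ℝ)⁻¹ * (q j : ℝ) * (-(c k : ℝ)) else 0) * b' k := by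
          rw [← Finset.sum_add_distrib]
          apply Finset.sum_congr rfl
          intro k _
          rw [hscast]
          ring
        have e2 : ∑ k, (if k = j then (c j : ℝ)⁻¹ else 0) * b' k = (c j : ℝ)⁻¹ * b' j := by
          simp [ite_mul, Finset.sum_ite_eq']
        have e3 : ∑ k, (if (c k : ℝ) < 0 then (c j : ℝ)⁻¹ * (q j : ℝ) * (-(c k : ℝ)) else 0) * b' k
            = (c j : ℝ)⁻¹ * (q j : ℝ) * m := by
          have e3a : ∑ k, (if (c k : ℝ) < 0 then (c j : ℝ)⁻¹ * (q j : ℝ) * (-(c k : ℝ)) else 0) * b' k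
              = ∑ k ∈ N, (c j : ℝ)⁻¹ * (q j : ℝ) * (-(c k : ℝ)) * b' k := by
            rw [hNdef, Finset.sum_filter]
            apply Finset.sum_congr rfl
            intro k _
            split_ifs <;> simp
          rw [e3a, hm', Finset.mul_sum]
          apply Finset.sum_congr rfl
          intro k _
          ring
        rw [e1, e2, e3]
        have e4 : b' j = (c j : ℝ) * b j - (q j : ℝ) * m := by
          rw [hb'def]; simp only [if_pos h]
        rw [e4]
        have hcne : (c j : ℝ) ≠ 0 := ne_of_gt h
        field_simp
        ring
    · refine ⟨fun k => if k = j then 1 else 0, ?_, ?_⟩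
      · intro k; by_cases hk : k = j <;> simp [hk]
      · have e2 : ∑ k, ((if k = j then (1:K) else 0 : K) : ℝ) * b' k = b' j := by
          simp [apply_ite (fun z : K => (z : ℝ)), ite_mul, Finset.sum_ite_eq']
        rw [e2, hb'def]
        simp only [if_neg h]
  -- representation of aL
  have hrepa : ∃ s : Fin t → K, (∀ k, 0 ≤ (s k : ℝ)) ∧ aL = ∑ k, (s k : ℝ) * b' k := by
    refine ⟨fun k => if (0:ℝ) < (c k : ℝ) then 1 else 0, ?_, ?_⟩
    · intro k; dsimp only; split_ifs <;> simp
    · have e1 : ∑ k, ((if (0:ℝ) < (c k : ℝ) then (1:K) else 0 : K) : ℝ) * b' k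
          = ∑ k ∈ P, b' k := by
        rw [hPdef, Finset.sum_filter]
        apply Finset.sum_congr rfl
        intro k _
        split_ifs <;> simp
      rw [e1]
      have e2 : ∑ k ∈ P, b' k = ∑ k ∈ P, ((c k : ℝ) * b k - (q k : ℝ) * m) :=
        Finset.sum_congr rfl (fun k hk => by rw [hb'def]; simp only [if_pos (hcposP k hk)])
      have e3 : ∑ k ∈ P, (q k : ℝ) * m = m := by
        rw [← Finset.sum_mul, hq2, one_mul]
      rw [e2, Finset.sum_sub_distrib, ← hS, e3]
      ring
  exact ⟨b', hb'pos, hli', hrepb, hrepa⟩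

lemma cone_trans (K : Subfield ℝ) {t u : ℕ} (b : Fin t → ℝ) (b' : Fin u → ℝ)
    (hb : ∀ j, ∃ s : Fin u → K, (∀ k, 0 ≤ (s k : ℝ)) ∧ b j = ∑ k, (s k : ℝ) * b' k)
    (x : ℝ) (hx : ∃ r : Fin t → K, (∀ j, 0 ≤ (r j : ℝ)) ∧ x = ∑ j, (r j : ℝ) * b j) :
    ∃ r' : Fin u → K, (∀ k, 0 ≤ (r' k : ℝ)) ∧ x = ∑ k, (r' k : ℝ) * b' k := by
  choose s hs1 hs2 using hb
  obtain ⟨r, hr1, hr2⟩ := hx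
  refine ⟨fun k => ∑ j, r j * s j k, ?_, ?_⟩
  · intro k
    push_cast
    apply Finset.sum_nonneg
    intro j _
    exact mul_nonneg (hr1 j) (hs1 j k)
  · rw [hr2]
    push_cast
    calc ∑ j : Fin t, (r j : ℝ) * b j
        = ∑ j : Fin t, ∑ k : Fin u, (r j : ℝ) * ((s j k : ℝ) * b' k) := by
          apply Finset.sum_congr rfl
          intro j _
          rw [hs2 j, Finset.mul_sum]
      _ = ∑ k : Fin u, (∑ j : Fin t, (r j : ℝ) * (s j k : ℝ)) * b' k := by
          rw [Finset.sum_comm]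
          apply Finset.sum_congr rfl
          intro k _
          rw [Finset.sum_mul]
          apply Finset.sum_congr rfl
          intro j _
          ring

theorem stmt3 (K : Subfield ℝ) (n : ℕ) (a : Fin n → ℝ) (ha : ∀ i, 0 < a i) :
    ∃ (t : ℕ) (b : Fin t → ℝ), (∀ j, 0 < b j) ∧ LinearIndependent K b ∧
      ∀ i, ∃ r : Fin t → K, (∀ j, 0 ≤ (r j : ℝ)) ∧ a i = ∑ j, (r j : ℝ) * b j := by
  induction n with
  | zero =>
    exact ⟨0, Fin.elim0, fun j => j.elim0, linearIndependent_empty_type, fun i => i.elim0⟩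
  | succ n ih =>
    obtain ⟨t, b, hbpos, hli, hrep⟩ := ih (fun i => a i.castSucc) (fun i => ha _)
    by_cases hsp : a (Fin.last n) ∈ Submodule.span K (Set.range b)
    · rw [Submodule.mem_span_range_iff_exists_fun] at hsp
      obtain ⟨c, hc⟩ := hsp
      obtain ⟨b', hb'pos, hli', hconv, hrepa⟩ :=
        step_lemma K b hbpos hli (a (Fin.last n)) (ha _) c hc.symm
      refine ⟨t, b', hb'pos, hli', ?_⟩
      intro i
      refine Fin.lastCases ?_ ?_ i
      · exact hrepa
      · intro i
        exact cone_trans K b b' hconv _ (hrep i)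
    · refine ⟨t + 1, Fin.cons (a (Fin.last n)) b, ?_, hli.fin_cons hsp, ?_⟩
      · intro j
        refine Fin.cases ?_ ?_ j
        · simpa using ha (Fin.last n)
        · intro i; simpa using hbpos i
      · intro i
        refine Fin.lastCases ?_ ?_ i
        · refine ⟨Fin.cons 1 0, ?_, ?_⟩
          · intro j
            refine Fin.cases ?_ ?_ j <;> simp
          · simp [Fin.sum_univ_succ]
        · intro i
          obtain ⟨r, hr1, hr2⟩ := hrep i
          refine ⟨Fin.cons 0 r, ?_, ?_⟩
          · intro j
            refine Fin.cases ?_ ?_ j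
            · simp
            · intro k; simpa using hr1 k
          · rw [hr2]
            simp [Fin.sum_univ_succ]
end

section
/- For every subfield K of ℝ there exists a symmetric biadditive function F : ℝ × ℝ → ℝ such that F^⊥ = K, where F^⊥ = {s ∈ ℝ : ∀ x y, F(s·x, y) = F(x, s·y)}. -/
set_option synthInstance.maxHeartbeats 1000000
set_option maxHeartbeats 1000000


theorem stmt5 (K : Subfield ℝ) :
    ∃ F : ℝ → ℝ → ℝ,
      (∀ x y, F x y = F y x) ∧
      (∀ x y z, F (x + y) z = F x z + F y z) ∧
      (∀ x y z, F x (y + z) = F x y + F x z) ∧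
      {s : ℝ | ∀ x y, F (s * x) y = F x (s * y)} = (K : Set ℝ) := by
  classical
  obtain ⟨q, hq⟩ := Submodule.exists_isCompl (Submodule.span K {(1 : ℝ)})
  let pr := (Submodule.span K {(1 : ℝ)}).linearProjOfIsCompl q hq
  let φ : ℝ → ℝ := fun x => (pr x : ℝ)
  have hsmuldef : ∀ (c : K) (x : ℝ), c • x = (c : ℝ) * x := fun c x => rfl
  have hadd : ∀ x y, φ (x + y) = φ x + φ y := by
    intro x y
    show ((pr (x + y) : ℝ)) = (pr x : ℝ) + (pr y : ℝ)
    rw [map_add]; rfl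
  have hsmul : ∀ (c : K) (x : ℝ), φ ((c : ℝ) * x) = (c : ℝ) * φ x := by
    intro c x
    show ((pr ((c : ℝ) * x) : ℝ)) = (c : ℝ) * (pr x : ℝ)
    rw [← hsmuldef, pr.map_smul]
    rfl
  have h1mem : (1 : ℝ) ∈ Submodule.span K {(1 : ℝ)} :=
    Submodule.mem_span_singleton_self 1
  have hφ1 : φ 1 = 1 := by
    have h := Submodule.linearProjOfIsCompl_apply_left hq ⟨1, h1mem⟩
    show ((pr 1 : ℝ)) = 1
    have : pr 1 = ⟨1, h1mem⟩ := h
    rw [this]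
  have hmem : ∀ x, φ x ∈ K := by
    intro x
    have h : (pr x : ℝ) ∈ Submodule.span K {(1 : ℝ)} := (pr x).2
    rw [Submodule.mem_span_singleton] at h
    obtain ⟨a, ha⟩ := h
    have : (a : ℝ) * 1 = φ x := by rw [← hsmuldef, ha]
    rw [show φ x = (a : ℝ) by rw [← this]; ring]
    exact a.2
  refine ⟨fun x y => φ x * φ y, fun x y => mul_comm _ _,
    fun x y z => by show φ (x+y) * φ z = φ x * φ z + φ y * φ z; rw [hadd]; ring,
    fun x y z => by show φ x * φ (y+z) = φ x * φ y + φ x * φ z; rw [hadd]; ring, ?_⟩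
  ext s
  simp only [Set.mem_setOf_eq, SetLike.mem_coe]
  constructor
  · intro h
    by_contra hs
    have key : ∀ y, φ (s * y) = φ s * φ y := by
      intro y
      have h1 := h 1 y
      simp only [mul_one] at h1
      rw [hφ1] at h1
      linarith [h1]
    have hcK : φ s ∈ K := hmem s
    have ht : s - φ s ≠ 0 := by
      intro h0
      exact hs (by rw [show s = φ s by linarith]; exact hcK)
    have hzero : φ ((s - φ s) * (s - φ s)⁻¹) = 0 := by
      rw [sub_mul]
      have h2 : φ (s * (s - φ s)⁻¹ - φ s * (s - φ s)⁻¹)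
          = φ (s * (s - φ s)⁻¹) - φ (φ s * (s - φ s)⁻¹) := by
        have h3 := hadd (s * (s - φ s)⁻¹ - φ s * (s - φ s)⁻¹) (φ s * (s - φ s)⁻¹)
        simp only [sub_add_cancel] at h3
        linarith
      rw [h2, key, hsmul ⟨φ s, hcK⟩]
      ring
    rw [mul_inv_cancel₀ ht, hφ1] at hzero
    exact one_ne_zero hzero
  · intro hs x y
    show φ (s * x) * φ y = φ x * φ (s * y)
    rw [hsmul ⟨s, hs⟩, hsmul ⟨s, hs⟩]
    ring
end

section
/- Let K be a subfield of ℝ. Then there exists an additive function f : ℝ → ℝ such that f(s·x) = s·f(x) for every s ∈ K and x ∈ ℝ, and f(x) = 0 if and only if x ∈ K. -/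
set_option synthInstance.maxHeartbeats 1000000 in
set_option maxHeartbeats 2000000 in
theorem stmt6 (K : Subfield ℝ) :
    ∃ f : ℝ → ℝ,
      (∀ x y, f (x + y) = f x + f y) ∧
      (∀ s ∈ K, ∀ x : ℝ, f (s * x) = s * f x) ∧
      (∀ x : ℝ, f x = 0 ↔ x ∈ K) := by
  classical
  set p : Submodule K ℝ := Submodule.span K {1} with hp
  have hmem : ∀ x : ℝ, x ∈ p ↔ x ∈ K := by
    intro x
    rw [hp, Submodule.mem_span_singleton]
    constructor
    · rintro ⟨a, rfl⟩
      simpa [Subfield.smul_def] using a.2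
    · intro hx
      exact ⟨⟨x, hx⟩, by simp [Subfield.smul_def]⟩
  obtain ⟨q, hq⟩ := Submodule.exists_isCompl p
  let proj := Submodule.projectionOnto p q hq
  refine ⟨fun x => x - (proj x : ℝ), ?_, ?_, ?_⟩
  · intro x y
    show (x + y) - (proj (x + y) : ℝ) = (x - proj x) + (y - proj y)
    rw [map_add, Submodule.coe_add]
    ring
  · intro s hs x
    have h1 : s * x = (⟨s, hs⟩ : K) • x := by simp [Subfield.smul_def]
    show s * x - (proj (s * x) : ℝ) = s * (x - (proj x : ℝ))
    rw [h1, map_smul]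
    show (⟨s, hs⟩ : K) • x - ((⟨s, hs⟩ : K) • proj x : p).1 = s * (x - (proj x : ℝ))
    rw [Submodule.coe_smul, Subfield.smul_def, Subfield.smul_def, smul_eq_mul, smul_eq_mul]
    ring
  · intro x
    constructor
    · intro hx
      have : x = (proj x : ℝ) := by linarith [sub_eq_zero.mp hx]
      rw [this] at *
      exact (hmem _).mp (proj x).2
    · intro hx
      have hxp : x ∈ p := (hmem x).mpr hx
      show x - (proj x : ℝ) = 0
      have := Submodule.projectionOnto_apply_left hq ⟨x, hxp⟩
      rw [show proj x = proj (⟨x, hxp⟩ : p) from rfl, this]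
      simp
end

section
/- Let K be a subfield of ℝ, let S ⊆ ℝ generate K as a field, and let S^⊥ = {F : ℝ×ℝ → ℝ : F symmetric biadditive, and F(s·x,y) = F(x,s·y) for all s ∈ S, x, y ∈ ℝ}. Then the set (S^⊥)^⊥ = {t ∈ ℝ : ∀ F ∈ S^⊥, ∀ x y, F(t·x,y) = F(x,t·y)} equals K. -/
set_option synthInstance.maxHeartbeats 400000 in
theorem aux_f_stmt10 (K : Subfield ℝ) (t : ℝ) (ht : t ∉ K) :
    ∃ f : ℝ → ℝ, (∀ a b, f (a+b) = f a + f b) ∧ (∀ s ∈ K, ∀ x, f (s*x) = s * f x)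
      ∧ f 1 = 1 ∧ f t = 0 := by
  have h1K : (1:ℝ) ∈ K := K.one_mem
  have htne1 : t ≠ 1 := fun h => ht (h ▸ h1K)
  have ht0 : t ≠ 0 := fun h => ht (h ▸ K.zero_mem)
  have hli : LinearIndepOn ↥K id ({1, t} : Set ℝ) := by
    rw [show ({1, t} : Set ℝ) = insert 1 {t} from rfl,
      linearIndepOn_id_insert (by simpa using htne1.symm)]
    refine ⟨LinearIndepOn.singleton (v := id) ht0, ?_⟩
    rw [Submodule.mem_span_singleton]
    rintro ⟨c, hc⟩
    have hcne : (c:ℝ) ≠ 0 := by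
      intro h; rw [show c • t = (c:ℝ) * t from rfl, h, zero_mul] at hc; exact one_ne_zero hc.symm
    have : t = (c:ℝ)⁻¹ := by
      rw [show c • t = (c:ℝ) * t from rfl] at hc
      field_simp
      linarith [hc]
    exact ht (this ▸ K.inv_mem c.2)
  have h1mem : (1:ℝ) ∈ hli.extend (Set.subset_univ _) :=
    hli.subset_extend _ (Set.mem_insert _ _)
  have htmem : t ∈ hli.extend (Set.subset_univ _) :=
    hli.subset_extend _ (Set.mem_insert_of_mem _ rfl)
  refine ⟨fun x => ((Module.Basis.extend hli).coord ⟨1, h1mem⟩ x : ℝ), ?_, ?_, ?_, ?_⟩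
  · intro a c; simp only [map_add]; push_cast; ring
  · intro s hs x
    have h : (s : ℝ) * x = (⟨s, hs⟩ : ↥K) • x := rfl
    simp only [h, map_smul]; rfl
  · have key : ((Module.Basis.extend hli).coord ⟨1, h1mem⟩) ((Module.Basis.extend hli) ⟨1, h1mem⟩) = 1 := by
      rw [Module.Basis.coord_apply, Module.Basis.repr_self]; simp
    rw [Module.Basis.extend_apply_self] at key
    have key2 : ((Module.Basis.extend hli).coord ⟨1, h1mem⟩) (1:ℝ) = 1 := key
    show (((Module.Basis.extend hli).coord ⟨1, h1mem⟩) (1:ℝ) : ℝ) = 1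
    rw [key2]; rfl
  · have key : ((Module.Basis.extend hli).coord ⟨1, h1mem⟩) ((Module.Basis.extend hli) ⟨t, htmem⟩) = 0 := by
      rw [Module.Basis.coord_apply, Module.Basis.repr_self, Finsupp.single_apply]
      have hne : (⟨1, h1mem⟩ : hli.extend _) ≠ ⟨t, htmem⟩ :=
        fun h => htne1 (congrArg Subtype.val h).symm
      simp [hne, htne1]
    rw [Module.Basis.extend_apply_self] at key
    have key2 : ((Module.Basis.extend hli).coord ⟨1, h1mem⟩) t = 0 := key
    show (((Module.Basis.extend hli).coord ⟨1, h1mem⟩) t : ℝ) = 0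
    rw [key2]; rfl

theorem stmt10 (S : Set ℝ) (h0 : (0 : ℝ) ∈ S) (h1 : (1 : ℝ) ∈ S)
    (K : Subfield ℝ) (hK : Subfield.closure S = K) :
    {t : ℝ | ∀ F : ℝ → ℝ → ℝ,
        ((∀ x y, F x y = F y x) ∧
         (∀ x y z, F (x + y) z = F x z + F y z) ∧
         (∀ x y z, F x (y + z) = F x y + F x z) ∧
         (∀ s ∈ S, ∀ x y : ℝ, F (s * x) y = F x (s * y))) →
        ∀ x y : ℝ, F (t * x) y = F x (t * y)} = (K : Set ℝ) := by
  set Cond : (ℝ → ℝ → ℝ) → Prop := fun F =>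
      ((∀ x y, F x y = F y x) ∧
       (∀ x y z, F (x + y) z = F x z + F y z) ∧
       (∀ x y z, F x (y + z) = F x y + F x z) ∧
       (∀ s ∈ S, ∀ x y : ℝ, F (s * x) y = F x (s * y))) with hCond
  -- basic consequences
  have hzl : ∀ F, Cond F → ∀ y, F 0 y = 0 := by
    rintro F ⟨_, hal, _, _⟩ y
    have := hal 0 0 y; rw [add_zero] at this; linarith
  have hnl : ∀ F, Cond F → ∀ x y, F (-x) y = -F x y := by
    rintro F hF x y
    have hal := hF.2.1
    have := hal x (-x) y; rw [add_neg_cancel, hzl F hF] at this; linarith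
  ext t
  simp only [Set.mem_setOf_eq, SetLike.mem_coe]
  constructor
  · intro hT
    by_contra htK
    obtain ⟨f, hadd, hsmul, hf1, hft⟩ := aux_f_stmt10 K t htK
    set F : ℝ → ℝ → ℝ := fun x y => f x * f y with hF
    have hc : Cond F := by
      refine ⟨fun x y => mul_comm _ _, fun x y z => by simp only [hF, hadd]; ring,
        fun x y z => by simp only [hF, hadd]; ring, ?_⟩
      intro s hs x y
      have hsK : s ∈ K := hK ▸ Subfield.subset_closure hs
      simp only [hF]; rw [hsmul s hsK, hsmul s hsK]; ring
    have key := hT F hc 1 t⁻¹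
    have ht0 : t ≠ 0 := fun h => htK (h ▸ K.zero_mem)
    rw [mul_one, mul_inv_cancel₀ ht0] at key
    simp only [hF, hft, hf1, zero_mul, one_mul] at key
    exact one_ne_zero key.symm
  · intro htK
    rw [← hK] at htK
    induction htK using Subfield.closure_induction with
    | mem s hs => exact fun F hF => hF.2.2.2 s hs
    | one => intro F hF x y; rw [one_mul, one_mul]
    | add a b ha hb pa pb =>
      intro F hF x y
      have hal := hF.2.1
      have har := hF.2.2.1
      have h1 : (a + b) * x = a * x + b * x := by ring
      have h2 : (a + b) * y = a * y + b * y := by ring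
      rw [h1, h2, hal, har, pa F hF x y, pb F hF x y]
    | neg a ha pa =>
      intro F hF x y
      have hsym := hF.1
      have hnr : ∀ u v, F u (-v) = -F u v := by
        intro u v; rw [hsym, hnl F hF, hsym]
      calc F ((-a) * x) y = F (a * (-x)) y := by rw [show (-a)*x = a*(-x) from by ring]
        _ = F (-x) (a * y) := pa F hF (-x) y
        _ = -F x (a * y) := hnl F hF x (a*y)
        _ = -F (a * x) y := by rw [pa F hF x y]
        _ = F (a * x) (-y) := (hnr _ _).symm
        _ = F x (a * (-y)) := pa F hF x (-y)
        _ = F x ((-a) * y) := by rw [show a*(-y) = (-a)*y from by ring]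
    | inv a ha pa =>
      intro F hF x y
      rcases eq_or_ne a 0 with rfl | ha0
      · rw [inv_zero, zero_mul, zero_mul, hzl F hF, hF.1 x 0,
          show (0:ℝ) = -0 from by ring, hnl F hF, hzl F hF, neg_zero]
      · have h1 : y = a * (a⁻¹ * y) := by field_simp
        have h2 : x = a * (a⁻¹ * x) := by field_simp
        calc F (a⁻¹ * x) y = F (a⁻¹ * x) (a * (a⁻¹ * y)) := by rw [← h1]
          _ = F (a * (a⁻¹ * x)) (a⁻¹ * y) := (pa F hF (a⁻¹ * x) (a⁻¹ * y)).symm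
          _ = F x (a⁻¹ * y) := by rw [← h2]
    | mul a b ha hb pa pb =>
      intro F hF x y
      have h1 : (a * b) * x = a * (b * x) := by ring
      have h2 : (a * b) * y = b * (a * y) := by ring
      rw [h1, h2, pa F hF (b * x) y, pb F hF x (a * y)]
end

section
/- Let F : ℝ → ℝ → ℝ be biadditive and define, for points a = (a₁,a₂), b = (b₁,b₂) in ℝ², μ_F([a,b]) = F(a₁+b₁, b₂−a₂). Let s ∈ ℝ and suppose F is symmetric. If a, b, c ∈ ℝ² are collinear points on a line of slope s (i.e., b₂−a₂ = s(b₁−a₁), c₂−a₂ = s(c₁−a₁)) and F(x, s·y) = F(s·x, y) for all x, y, then μ_F([a,b]) = μ_F([a,c]) + μ_F([c,b]). -/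
theorem stmt13 (F : ℝ → ℝ → ℝ)
    (hsymm : ∀ x y, F x y = F y x)
    (hadd1 : ∀ x y z, F (x + y) z = F x z + F y z)
    (hadd2 : ∀ x y z, F x (y + z) = F x y + F x z)
    (s : ℝ) (hs : ∀ x y : ℝ, F x (s * y) = F (s * x) y)
    (a b c : ℝ × ℝ)
    (hab : b.2 - a.2 = s * (b.1 - a.1))
    (hac : c.2 - a.2 = s * (c.1 - a.1)) :
    F (a.1 + b.1) (b.2 - a.2)
      = F (a.1 + c.1) (c.2 - a.2) + F (c.1 + b.1) (b.2 - c.2) := by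
  have h0 : ∀ x, F x 0 = 0 := by
    intro x
    have h := hadd2 x 0 0
    simp at h
    linarith
  have hsub2 : ∀ x y z, F x (y - z) = F x y - F x z := by
    intro x y z
    have h := hadd2 x (y - z) z
    simp at h
    linarith
  have hcb : b.2 - c.2 = s * (b.1 - c.1) := by
    have : b.2 - c.2 = (b.2 - a.2) - (c.2 - a.2) := by ring
    rw [this, hab, hac]; ring
  rw [hab, hac, hcb, hs, hs, hs]
  have gsymm : ∀ x y, F (s * x) y = F (s * y) x := by
    intro x y
    rw [← hs, hsymm]
  have expand : ∀ x y : ℝ, F (s * (x + y)) (y - x)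
      = F (s * x) y - F (s * x) x + F (s * y) y - F (s * y) x := by
    intro x y
    rw [mul_add, hadd1, hsub2, hsub2, gsymm y x]
    ring
  rw [expand, expand, expand, gsymm a.1 c.1, gsymm c.1 b.1, gsymm a.1 b.1]
  ring
end

section
/- A function F : (0,∞) × (0,∞) → ℝ that is additive in each variable (F(x₁+x₂,y) = F(x₁,y)+F(x₂,y) and F(x,y₁+y₂) = F(x,y₁)+F(x,y₂) for positive arguments) extends uniquely to a biadditive function ℝ × ℝ → ℝ. -/
private lemma addExt (f g : ℝ → ℝ) (hf : ∀ a b, f (a + b) = f a + f b)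
    (hg : ∀ a b, g (a + b) = g a + g b) (h : ∀ t, 0 < t → f t = g t) :
    ∀ t, f t = g t := by
  have hf0 : f 0 = 0 := by have := hf 0 0; simp at this; linarith
  have hg0 : g 0 = 0 := by have := hg 0 0; simp at this; linarith
  intro t
  rcases lt_trichotomy t 0 with ht | ht | ht
  · have hfn : f t + f (-t) = 0 := by rw [← hf]; simp [hf0]
    have hgn : g t + g (-t) = 0 := by rw [← hg]; simp [hg0]
    have := h (-t) (by linarith)
    linarith
  · simp [ht, hf0, hg0]
  · exact h t ht

private def phiF (F : ℝ → ℝ → ℝ) (y x : ℝ) : ℝ :=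
  F (x + (|x| + 1)) y - F (|x| + 1) y

private def GF (F : ℝ → ℝ → ℝ) (x y : ℝ) : ℝ :=
  phiF F (y + (|y| + 1)) x - phiF F (|y| + 1) x

theorem stmt17 (F : ℝ → ℝ → ℝ)
    (haddx : ∀ x₁ x₂ y : ℝ, 0 < x₁ → 0 < x₂ → 0 < y →
      F (x₁ + x₂) y = F x₁ y + F x₂ y)
    (haddy : ∀ x y₁ y₂ : ℝ, 0 < x → 0 < y₁ → 0 < y₂ →
      F x (y₁ + y₂) = F x y₁ + F x y₂) :
    ∃! G : ℝ → ℝ → ℝ,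
      ((∀ x y z, G (x + y) z = G x z + G y z) ∧
       (∀ x y z, G x (y + z) = G x y + G x z)) ∧
      ∀ x y : ℝ, 0 < x → 0 < y → G x y = F x y := by
  have pc : ∀ x : ℝ, (0:ℝ) < |x| + 1 := fun x => by positivity
  have pxc : ∀ x : ℝ, (0:ℝ) < x + (|x| + 1) := fun x => by
    have := neg_abs_le x; linarith
  -- phi is independent of the shift
  have phi_eq : ∀ y x a : ℝ, 0 < y → 0 < a → 0 < x + a →
      phiF F y x = F (x + a) y - F a y := by
    intro y x a hy ha hxa
    have h1 := haddx (x + (|x| + 1)) a y (pxc x) ha hy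
    have h2 := haddx (x + a) (|x| + 1) y hxa (pc x) hy
    have e : x + (|x| + 1) + a = x + a + (|x| + 1) := by ring
    rw [e] at h1
    unfold phiF
    linarith
  -- phi additive in x
  have phi_addx : ∀ y x₁ x₂ : ℝ, 0 < y →
      phiF F y (x₁ + x₂) = phiF F y x₁ + phiF F y x₂ := by
    intro y x₁ x₂ hy
    have h := phi_eq y (x₁ + x₂) ((|x₁| + 1) + (|x₂| + 1)) hy
      (by linarith [pc x₁, pc x₂]) (by have := pxc x₁; have := pxc x₂; linarith)
    rw [h]
    have e : x₁ + x₂ + ((|x₁| + 1) + (|x₂| + 1))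
        = (x₁ + (|x₁| + 1)) + (x₂ + (|x₂| + 1)) := by ring
    rw [e, haddx _ _ _ (pxc x₁) (pxc x₂) hy, haddx _ _ _ (pc x₁) (pc x₂) hy]
    unfold phiF; ring
  -- phi agrees with F on positives
  have phi_pos : ∀ y x : ℝ, 0 < y → 0 < x → phiF F y x = F x y := by
    intro y x hy hx
    unfold phiF
    rw [haddx x (|x| + 1) y hx (pc x) hy]; ring
  -- phi additive in y (for positive y's)
  have phi_addy : ∀ y₁ y₂ x : ℝ, 0 < y₁ → 0 < y₂ →
      phiF F (y₁ + y₂) x = phiF F y₁ x + phiF F y₂ x := by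
    intro y₁ y₂ x h1 h2
    unfold phiF
    rw [haddy _ _ _ (pxc x) h1 h2, haddy _ _ _ (pc x) h1 h2]; ring
  -- G independent of shift in y
  have G_eq : ∀ x y b : ℝ, 0 < b → 0 < y + b →
      GF F x y = phiF F (y + b) x - phiF F b x := by
    intro x y b hb hyb
    have h1 := phi_addy (y + (|y| + 1)) b x (pxc y) hb
    have h2 := phi_addy (y + b) (|y| + 1) x hyb (pc y)
    have e : y + (|y| + 1) + b = y + b + (|y| + 1) := by ring
    rw [e] at h1
    unfold GF
    linarith
  have Gaddx : ∀ x y z : ℝ, GF F (x + y) z = GF F x z + GF F y z := by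
    intro x y z
    unfold GF
    rw [phi_addx _ x y (pxc z), phi_addx _ x y (pc z)]
    ring
  have Gaddy : ∀ x y z : ℝ, GF F x (y + z) = GF F x y + GF F x z := by
    intro x y z
    have h := G_eq x (y + z) ((|y| + 1) + (|z| + 1))
      (by linarith [pc y, pc z]) (by have := pxc y; have := pxc z; linarith)
    rw [h]
    have e : y + z + ((|y| + 1) + (|z| + 1))
        = (y + (|y| + 1)) + (z + (|z| + 1)) := by ring
    rw [e, phi_addy _ _ x (pxc y) (pxc z), phi_addy _ _ x (pc y) (pc z)]
    unfold GF; ring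
  have Gpos : ∀ x y : ℝ, 0 < x → 0 < y → GF F x y = F x y := by
    intro x y hx hy
    unfold GF
    rw [phi_pos _ _ (pxc y) hx, phi_pos _ _ (pc y) hx,
      haddy x y (|y| + 1) hx hy (pc y)]
    ring
  refine ⟨GF F, ⟨⟨Gaddx, Gaddy⟩, Gpos⟩, ?_⟩
  rintro G' ⟨⟨h'x, h'y⟩, h'pos⟩
  funext x y
  -- first: equality for y > 0
  have step1 : ∀ y : ℝ, 0 < y → ∀ x : ℝ, G' x y = GF F x y := by
    intro y hy
    exact addExt (fun x => G' x y) (fun x => GF F x y)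
      (fun a b => h'x a b y) (fun a b => Gaddx a b y)
      (fun t ht => (h'pos t y ht hy).trans (Gpos t y ht hy).symm)
  exact addExt (fun y => G' x y) (fun y => GF F x y)
    (fun a b => h'y x a b) (fun a b => Gaddy x a b)
    (fun t ht => step1 t ht x) y
end

section
/- Let K be a subfield of ℝ and t ∈ ℝ \ K. Then there exists a symmetric biadditive F : ℝ × ℝ → ℝ with F(s·x, y) = F(x, s·y) for all s ∈ K and all x, y, but F(t·x, y) ≠ F(x, t·y) for some x, y ∈ ℝ. -/
set_option synthInstance.maxHeartbeats 1000000
set_option maxHeartbeats 1000000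

theorem stmt18 (K : Subfield ℝ) (t : ℝ) (ht : t ∉ K) :
    ∃ F : ℝ → ℝ → ℝ,
      (∀ x y, F x y = F y x) ∧
      (∀ x y z, F (x + y) z = F x z + F y z) ∧
      (∀ x y z, F x (y + z) = F x y + F x z) ∧
      (∀ s ∈ K, ∀ x y : ℝ, F (s * x) y = F x (s * y)) ∧
      ∃ x y : ℝ, F (t * x) y ≠ F x (t * y) := by
  have ht1 : t ∉ ({1} : Set ℝ) := by
    simp only [Set.mem_singleton_iff]
    intro h; exact ht (h ▸ K.one_mem)
  have li : LinearIndepOn K id ({t} ∪ {1} : Set ℝ) := by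
    rw [Set.singleton_union, linearIndepOn_id_insert ht1]
    refine ⟨LinearIndepOn.singleton (v := id) one_ne_zero, ?_⟩
    rw [Submodule.mem_span_singleton]
    rintro ⟨a, ha⟩
    apply ht
    rw [← ha, Subfield.smul_def, smul_eq_mul, mul_one]
    exact a.2
  set b := Module.Basis.extend li with hb
  have htmem : t ∈ li.extend (Set.subset_univ _) := by
    apply li.subset_extend
    simp
  set f : ℝ →ₗ[K] K := b.coord ⟨t, htmem⟩ with hf
  have hft : f t = 1 := by
    have hbt : b ⟨t, htmem⟩ = t := Module.Basis.extend_apply_self li _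
    calc f t = f (b ⟨t, htmem⟩) := by rw [hbt]
    _ = 1 := by simp only [hf, Module.Basis.coord_apply, Module.Basis.repr_self, Finsupp.single_eq_same]
  have h1mem : (1 : ℝ) ∈ li.extend (Set.subset_univ _) := by
    apply li.subset_extend
    simp
  have hf1 : f 1 = 0 := by
    have hne : (⟨1, h1mem⟩ : li.extend (Set.subset_univ _)) ≠ ⟨t, htmem⟩ := by
      intro h
      apply ht
      have : (1 : ℝ) = t := congrArg Subtype.val h
      exact this ▸ K.one_mem
    have hb1 : b ⟨1, h1mem⟩ = 1 := Module.Basis.extend_apply_self li _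
    calc f 1 = f (b ⟨1, h1mem⟩) := by rw [hb1]
    _ = 0 := by simp only [hf, Module.Basis.coord_apply, Module.Basis.repr_self]; exact Finsupp.single_eq_of_ne' hne
  refine ⟨fun x y => (f x : ℝ) * (f y : ℝ), fun x y => mul_comm _ _, ?_, ?_, ?_, 1, t, ?_⟩
  · intro x y z; dsimp only; rw [map_add]; push_cast; ring
  · intro x y z; dsimp only; rw [map_add]; push_cast; ring
  · intro s hs x y
    have h1 : f (s * x) = ⟨s, hs⟩ * f x := by
      have hx : s * x = (⟨s, hs⟩ : K) • x := rfl
      rw [hx, map_smul]; rfl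
    have h2 : f (s * y) = ⟨s, hs⟩ * f y := by
      have hy : s * y = (⟨s, hs⟩ : K) • y := rfl
      rw [hy, map_smul]; rfl
    dsimp only; rw [h1, h2]; push_cast; ring
  · dsimp only
    rw [mul_one, hft, hf1]
    push_cast
    norm_num
end
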